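/- arXiv:1604.02212 — 8 statements merged into one kernel-verified Lean document; each statement's English description precedes it below -/
import Mathlib

section
/- Let Q be a symmetric positive definite n×n matrix. Define v(BQP) = max{x^T Q x : x ∈ {-1,1}^n} and v(QCQP) = max{x^T Q x + s : x ∈ [s-1, 1-s]^n, x^T Q x ≤ 1}. Then v(QCQP) = 2 - 1/√(v(BQP)) if v(BQP) ≥ 1, and v(QCQP) = 1 if v(BQP) < 1. -/
open Matrix

private lemma qf_nonneg {n : ℕ} {Q : Matrix (Fin n) (Fin n) ℝ} (hQ : Q.PosDef)
    (x : Fin n → ℝ) : 0 ≤ x ⬝ᵥ Q.mulVec x := by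
  simpa using hQ.posSemidef.re_dotProduct_nonneg x

private lemma qf_smul {n : ℕ} (Q : Matrix (Fin n) (Fin n) ℝ) (c : ℝ) (x : Fin n → ℝ) :
    (c • x) ⬝ᵥ Q.mulVec (c • x) = c ^ 2 * (x ⬝ᵥ Q.mulVec x) := by
  simp [Matrix.mulVec_smul, dotProduct_smul, smul_dotProduct, smul_eq_mul]
  ring

private lemma qf_expand {n : ℕ} {Q : Matrix (Fin n) (Fin n) ℝ} (hQs : Q.IsSymm)
    (a b : Fin n → ℝ) (t : ℝ) :
    (a + t • b) ⬝ᵥ Q.mulVec (a + t • b) =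
      a ⬝ᵥ Q.mulVec a + 2 * t * (a ⬝ᵥ Q.mulVec b) + t ^ 2 * (b ⬝ᵥ Q.mulVec b) := by
  have hsym : b ⬝ᵥ Q.mulVec a = a ⬝ᵥ Q.mulVec b := by
    rw [Matrix.dotProduct_mulVec, ← Matrix.mulVec_transpose, hQs.eq, dotProduct_comm]
  simp [Matrix.mulVec_add, Matrix.mulVec_smul, dotProduct_add, add_dotProduct,
    dotProduct_smul, smul_dotProduct, hsym, smul_eq_mul]
  ring

private lemma cube_bound {n : ℕ} {Q : Matrix (Fin n) (Fin n) ℝ} (hQs : Q.IsSymm)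
    (hQ : Q.PosDef) {B : ℝ}
    (hub : ∀ x : Fin n → ℝ, (∀ j, x j = 1 ∨ x j = -1) → x ⬝ᵥ Q.mulVec x ≤ B) :
    ∀ x : Fin n → ℝ, (∀ j, -1 ≤ x j ∧ x j ≤ 1) → x ⬝ᵥ Q.mulVec x ≤ B := by
  classical
  suffices H : ∀ k : ℕ, ∀ x : Fin n → ℝ, (∀ j, -1 ≤ x j ∧ x j ≤ 1) →
      (Finset.univ.filter (fun j => ¬(x j = 1 ∨ x j = -1))).card ≤ k →
      x ⬝ᵥ Q.mulVec x ≤ B by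
    intro x hx
    exact H _ x hx le_rfl
  intro k
  induction k with
  | zero =>
    intro x hx hcard
    refine hub x fun j => ?_
    by_contra h
    have hj : j ∈ Finset.univ.filter (fun j => ¬(x j = 1 ∨ x j = -1)) :=
      Finset.mem_filter.mpr ⟨Finset.mem_univ j, h⟩
    have := Finset.card_pos.mpr ⟨j, hj⟩
    omega
  | succ k ih =>
    intro x hx hcard
    by_cases hall : ∀ j, x j = 1 ∨ x j = -1
    · exact hub x hall
    · push_neg at hall
      obtain ⟨j, hj1, hj2⟩ := hall
      set e : Fin n → ℝ := Pi.single j 1 with he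
      set y : Fin n → ℝ := Function.update x j 0 with hy
      have hupd : ∀ t : ℝ, Function.update x j t = y + t • e := by
        intro t
        funext i
        by_cases hij : i = j
        · subst hij; simp [hy, he]
        · simp [hy, he, Function.update_of_ne hij, Pi.single_eq_of_ne hij]
      have expand : ∀ t : ℝ, (Function.update x j t) ⬝ᵥ Q.mulVec (Function.update x j t) =
          y ⬝ᵥ Q.mulVec y + 2 * t * (y ⬝ᵥ Q.mulVec e) + t ^ 2 * (e ⬝ᵥ Q.mulVec e) := by
        intro t; rw [hupd t, qf_expand hQs]
      have hA : 0 ≤ e ⬝ᵥ Q.mulVec e := qf_nonneg hQ e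
      have hxx : x = Function.update x j (x j) := (Function.update_eq_self j x).symm
      have h1 := (hx j).1
      have h2 := (hx j).2
      -- bound f x by the value at one of the two sign choices at coordinate j
      have key : ∃ t : ℝ, (t = 1 ∨ t = -1) ∧
          x ⬝ᵥ Q.mulVec x ≤
            (Function.update x j t) ⬝ᵥ Q.mulVec (Function.update x j t) := by
        rcases le_total 0 (y ⬝ᵥ Q.mulVec e) with hD | hD
        · refine ⟨1, Or.inl rfl, ?_⟩
          conv_lhs => rw [hxx]
          rw [expand (x j), expand 1]
          nlinarith [mul_nonneg hD (by linarith : (0:ℝ) ≤ 1 - x j),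
            mul_nonneg hA (by nlinarith : (0:ℝ) ≤ 1 - x j ^ 2)]
        · refine ⟨-1, Or.inr rfl, ?_⟩
          conv_lhs => rw [hxx]
          rw [expand (x j), expand (-1)]
          nlinarith [mul_nonneg (neg_nonneg.mpr hD) (by linarith : (0:ℝ) ≤ 1 + x j),
            mul_nonneg hA (by nlinarith : (0:ℝ) ≤ 1 - x j ^ 2)]
      obtain ⟨t, ht, hle⟩ := key
      have hbox : ∀ i, -1 ≤ Function.update x j t i ∧ Function.update x j t i ≤ 1 := by
        intro i
        by_cases hij : i = j
        · subst hij
          rcases ht with ht | ht <;> rw [Function.update_self, ht] <;> norm_num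
        · rw [Function.update_of_ne hij]; exact hx i
      have hjmem : j ∈ Finset.univ.filter (fun i => ¬(x i = 1 ∨ x i = -1)) := by
        simp [hj1, hj2]
      have hsub : Finset.univ.filter
            (fun i => ¬(Function.update x j t i = 1 ∨ Function.update x j t i = -1)) ⊆
          (Finset.univ.filter (fun i => ¬(x i = 1 ∨ x i = -1))).erase j := by
        intro i hi
        simp only [Finset.mem_filter, Finset.mem_univ, true_and] at hi
        have hij : i ≠ j := by
          intro h
          subst h
          rw [Function.update_self] at hi
          exact hi ht
        rw [Function.update_of_ne hij] at hi
        exact Finset.mem_erase.mpr ⟨hij, Finset.mem_filter.mpr ⟨Finset.mem_univ i, hi⟩⟩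
      have hcard' : (Finset.univ.filter
          (fun i => ¬(Function.update x j t i = 1 ∨ Function.update x j t i = -1))).card ≤ k := by
        have h1' := Finset.card_le_card hsub
        have h2' := Finset.card_erase_of_mem hjmem
        have h3' := Finset.card_pos.mpr ⟨j, hjmem⟩
        omega
      exact hle.trans (ih _ hbox hcard')

theorem stmt_0 (n : ℕ) (Q : Matrix (Fin n) (Fin n) ℝ) (hQs : Q.IsSymm) (hQ : Q.PosDef)
    (vBQP vQCQP : ℝ)
    (hB : IsGreatest {v : ℝ | ∃ x : Fin n → ℝ, (∀ j, x j = 1 ∨ x j = -1) ∧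
      v = x ⬝ᵥ Q.mulVec x} vBQP)
    (hQC : IsGreatest {v : ℝ | ∃ x : Fin n → ℝ, ∃ s : ℝ,
      (∀ j, s - 1 ≤ x j ∧ x j ≤ 1 - s) ∧ x ⬝ᵥ Q.mulVec x ≤ 1 ∧
      v = x ⬝ᵥ Q.mulVec x + s} vQCQP) :
    (1 ≤ vBQP → vQCQP = 2 - 1 / Real.sqrt vBQP) ∧ (vBQP < 1 → vQCQP = 1) := by
  classical
  -- dispose of the degenerate case n = 0 (the QCQP set is all of ℝ, no greatest)
  rcases Nat.eq_zero_or_pos n with hn | hn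
  · exfalso
    have hmem : vQCQP + 1 ∈ {v : ℝ | ∃ x : Fin n → ℝ, ∃ s : ℝ,
        (∀ j, s - 1 ≤ x j ∧ x j ≤ 1 - s) ∧ x ⬝ᵥ Q.mulVec x ≤ 1 ∧
        v = x ⬝ᵥ Q.mulVec x + s} := by
      refine ⟨0, vQCQP + 1, fun j => absurd (j.2.trans_eq hn) (Nat.not_lt_zero _), ?_, ?_⟩
      · simp
      · simp
    have := hQC.2 hmem
    linarith
  obtain ⟨xs, hxs, hxsB⟩ := hB.1
  have hB0 : 0 ≤ vBQP := hxsB ▸ qf_nonneg hQ xs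
  have hub : ∀ x : Fin n → ℝ, (∀ j, x j = 1 ∨ x j = -1) → x ⬝ᵥ Q.mulVec x ≤ vBQP :=
    fun x h => hB.2 ⟨x, h, rfl⟩
  set j0 : Fin n := ⟨0, hn⟩
  -- general feasibility bound: any feasible value v = q + s satisfies usable inequalities
  have feas : ∀ x : Fin n → ℝ, ∀ s : ℝ, (∀ j, s - 1 ≤ x j ∧ x j ≤ 1 - s) →
      x ⬝ᵥ Q.mulVec x ≤ 1 →
      s ≤ 1 ∧ 0 ≤ x ⬝ᵥ Q.mulVec x ∧ x ⬝ᵥ Q.mulVec x ≤ (1 - s) ^ 2 * vBQP := by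
    intro x s hbox hq1
    have hs1 : s ≤ 1 := by
      have := (hbox j0).1.trans (hbox j0).2
      linarith
    refine ⟨hs1, qf_nonneg hQ x, ?_⟩
    rcases eq_or_lt_of_le (by linarith : (0:ℝ) ≤ 1 - s) with hr | hr
    · -- s = 1 forces x = 0
      have hx0 : x = 0 := by
        funext i
        have h1 := (hbox i).1
        have h2 := (hbox i).2
        have : x i = 0 := le_antisymm (by linarith) (by linarith)
        simp [this]
      simp [hx0, ← hr]
    · set r : ℝ := 1 - s with hrdef
      have hscale : ((1 / r) • x) ⬝ᵥ Q.mulVec ((1 / r) • x) ≤ vBQP := by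
        refine cube_bound hQs hQ hub _ fun j => ?_
        have h1 := (hbox j).1
        have h2 := (hbox j).2
        constructor
        · simp only [Pi.smul_apply, smul_eq_mul]
          rw [show 1 / r * x j = x j / r by ring, le_div_iff₀ hr]
          linarith
        · simp only [Pi.smul_apply, smul_eq_mul]
          rw [show 1 / r * x j = x j / r by ring, div_le_iff₀ hr]
          linarith
      rw [qf_smul] at hscale
      have : (1 / r) ^ 2 > 0 := by positivity
      calc x ⬝ᵥ Q.mulVec x = r ^ 2 * ((1 / r) ^ 2 * (x ⬝ᵥ Q.mulVec x)) := by
            field_simp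
        _ ≤ r ^ 2 * vBQP := by
            have hr2 : (0:ℝ) ≤ r ^ 2 := sq_nonneg r
            exact mul_le_mul_of_nonneg_left hscale hr2
  constructor
  · -- case vBQP ≥ 1
    intro h1B
    have hBpos : (0:ℝ) < vBQP := by linarith
    set sb : ℝ := Real.sqrt vBQP with hsb
    have hsb1 : 1 ≤ sb := by
      rw [hsb]
      exact Real.one_le_sqrt.mpr h1B
    have hsbpos : 0 < sb := by linarith
    have hsbsq : sb ^ 2 = vBQP := Real.sq_sqrt hB0
    refine le_antisymm ?_ ?_
    · -- upper bound: every feasible value ≤ 2 - 1/√B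
      obtain ⟨x, s, hbox, hq1, hv⟩ := hQC.1
      obtain ⟨hs1, hq0, hqB⟩ := feas x s hbox hq1
      set q : ℝ := x ⬝ᵥ Q.mulVec x with hqdef
      set u : ℝ := Real.sqrt q with hu
      have hu0 : 0 ≤ u := Real.sqrt_nonneg q
      have husq : u ^ 2 = q := Real.sq_sqrt hq0
      have hu1 : u ≤ 1 := by
        rw [hu]
        calc Real.sqrt q ≤ Real.sqrt 1 := Real.sqrt_le_sqrt hq1
          _ = 1 := Real.sqrt_one
      have hule : u ≤ (1 - s) * sb := by
        rw [hu, hsb]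
        calc Real.sqrt q ≤ Real.sqrt ((1 - s) ^ 2 * vBQP) := Real.sqrt_le_sqrt hqB
          _ = (1 - s) * Real.sqrt vBQP := by
              rw [Real.sqrt_mul (sq_nonneg _), Real.sqrt_sq (by linarith : (0:ℝ) ≤ 1 - s)]
      rw [hv]
      have hgoal : q + s ≤ 2 - 1 / sb := by
        have key : s * sb ≤ sb - u := by nlinarith
        have hinv : sb * (1 / sb) = 1 := mul_one_div_cancel (ne_of_gt hsbpos)
        have haux : (0:ℝ) ≤ sb * (u + 1) - 1 := by
          have h11 : (1:ℝ) * 1 ≤ sb * (u + 1) :=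
            mul_le_mul hsb1 (by linarith) (by norm_num) (by linarith)
          linarith
        have main : sb * (q + s) ≤ sb * (2 - 1 / sb) := by
          nlinarith [mul_nonneg (by linarith : (0:ℝ) ≤ 1 - u) haux]
        exact le_of_mul_le_mul_left main hsbpos
      exact hgoal
    · -- 2 - 1/√B is attained
      refine hQC.2 ⟨(1 / sb) • xs, 1 - 1 / sb, ?_, ?_, ?_⟩
      · intro j
        have : xs j = 1 ∨ xs j = -1 := hxs j
        have h1sb0 : 0 < 1 / sb := by positivity
        rcases this with h | h <;>
          simp only [Pi.smul_apply, smul_eq_mul, h] <;> constructor <;> linarith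
      · rw [qf_smul, ← hxsB]
        rw [div_pow, one_pow, hsbsq]
        rw [div_mul_eq_mul_div, one_mul, div_self (by linarith)]
      · rw [qf_smul, ← hxsB, div_pow, one_pow, hsbsq,
          div_mul_eq_mul_div, one_mul, div_self (by linarith)]
        ring
  · -- case vBQP < 1
    intro hBlt
    refine le_antisymm ?_ ?_
    · obtain ⟨x, s, hbox, hq1, hv⟩ := hQC.1
      obtain ⟨hs1, hq0, hqB⟩ := feas x s hbox hq1
      set q : ℝ := x ⬝ᵥ Q.mulVec x with hqdef
      rw [hv]
      rcases le_total s 0 with hs0 | hs0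
      · linarith
      · nlinarith [mul_nonneg hs0 (by linarith : (0:ℝ) ≤ 1 - s), sq_nonneg (1 - s),
          mul_nonneg (sq_nonneg (1 - s)) (by linarith : (0:ℝ) ≤ 1 - vBQP)]
    · refine hQC.2 ⟨0, 1, fun j => by norm_num, by simp, by simp⟩
end

section
/- Suppose the linear system (x^i)^T x ≤ 0, i = 1,…,m, has a nonzero solution x̃ ∈ ℝ^n, and let (x*, ζ*) be an optimal solution of the convex relaxation max{ζ : ω_i(1 - 2(x^i)^T x + ‖x^i‖²) ≥ ζ for all i, ‖x‖ ≤ 1}, where ω_i > 0. Define α = (-(x*)^T x̃ + √(‖x̃‖²(1-‖x*‖²) + ((x*)^T x̃)²))/‖x̃‖². Then α ≥ 0, ‖x* + α x̃‖ = 1, and min_i ω_i ‖x* + α x̃ - x^i‖² ≥ ζ*; hence x* + α x̃ is optimal for the ball-constrained maximin dispersion problem max_{‖x‖≤1} min_i ω_i ‖x - x^i‖², and the relaxation is tight. -/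
open Matrix

theorem stmt_3 (n m : ℕ) (hm : 0 < m) (x : Fin m → (Fin n → ℝ)) (ω : Fin m → ℝ)
    (hω : ∀ i, 0 < ω i)
    (xt : Fin n → ℝ) (hxt : xt ≠ 0) (hsys : ∀ i, x i ⬝ᵥ xt ≤ 0)
    (xs : Fin n → ℝ) (ζs : ℝ)
    (hopt : IsGreatest {ζ : ℝ | ∃ y : Fin n → ℝ, Real.sqrt (y ⬝ᵥ y) ≤ 1 ∧
      ∀ i, ω i * (1 - 2 * (x i ⬝ᵥ y) + x i ⬝ᵥ x i) ≥ ζ} ζs)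
    (hfeas : Real.sqrt (xs ⬝ᵥ xs) ≤ 1 ∧
      ∀ i, ω i * (1 - 2 * (x i ⬝ᵥ xs) + x i ⬝ᵥ x i) ≥ ζs) :
    let α : ℝ := (-(xs ⬝ᵥ xt) +
      Real.sqrt ((xt ⬝ᵥ xt) * (1 - xs ⬝ᵥ xs) + (xs ⬝ᵥ xt) ^ 2)) / (xt ⬝ᵥ xt)
    0 ≤ α ∧ Real.sqrt ((xs + α • xt) ⬝ᵥ (xs + α • xt)) = 1 ∧
      (∀ i, ω i * ((xs + α • xt - x i) ⬝ᵥ (xs + α • xt - x i)) ≥ ζs) ∧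
      IsGreatest {v : ℝ | ∃ y : Fin n → ℝ, Real.sqrt (y ⬝ᵥ y) ≤ 1 ∧
          v = ⨅ i : Fin m, ω i * ((y - x i) ⬝ᵥ (y - x i))}
        (⨅ i : Fin m, ω i * ((xs + α • xt - x i) ⬝ᵥ (xs + α • xt - x i))) := by
  obtain ⟨hfeas1, hfeas2⟩ := hfeas
  haveI : Nonempty (Fin m) := ⟨⟨0, hm⟩⟩
  have hnn : ∀ y : Fin n → ℝ, 0 ≤ y ⬝ᵥ y := fun y =>
    Finset.sum_nonneg fun i _ => mul_self_nonneg (y i)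
  have ha : 0 < xt ⬝ᵥ xt := by
    rcases (hnn xt).lt_or_eq with h | h
    · exact h
    · exact absurd (dotProduct_self_eq_zero.mp h.symm) hxt
  have hs1 : xs ⬝ᵥ xs ≤ 1 := by
    nlinarith [Real.sq_sqrt (hnn xs), Real.sqrt_nonneg (xs ⬝ᵥ xs)]
  have hD : 0 ≤ (xt ⬝ᵥ xt) * (1 - xs ⬝ᵥ xs) + (xs ⬝ᵥ xt) ^ 2 := by nlinarith
  have hsq : Real.sqrt ((xt ⬝ᵥ xt) * (1 - xs ⬝ᵥ xs) + (xs ⬝ᵥ xt) ^ 2) ^ 2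
      = (xt ⬝ᵥ xt) * (1 - xs ⬝ᵥ xs) + (xs ⬝ᵥ xt) ^ 2 := Real.sq_sqrt hD
  have hsqnn := Real.sqrt_nonneg ((xt ⬝ᵥ xt) * (1 - xs ⬝ᵥ xs) + (xs ⬝ᵥ xt) ^ 2)
  have hsqb : xs ⬝ᵥ xt ≤ Real.sqrt ((xt ⬝ᵥ xt) * (1 - xs ⬝ᵥ xs) + (xs ⬝ᵥ xt) ^ 2) := by
    nlinarith
  intro α
  have hα : α = (-(xs ⬝ᵥ xt) +
      Real.sqrt ((xt ⬝ᵥ xt) * (1 - xs ⬝ᵥ xs) + (xs ⬝ᵥ xt) ^ 2)) / (xt ⬝ᵥ xt) := rfl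
  clear_value α
  have hα0 : 0 ≤ α := by
    rw [hα]
    exact div_nonneg (by linarith) ha.le
  have haα : (xt ⬝ᵥ xt) * α = -(xs ⬝ᵥ xt) +
      Real.sqrt ((xt ⬝ᵥ xt) * (1 - xs ⬝ᵥ xs) + (xs ⬝ᵥ xt) ^ 2) := by
    rw [hα]; field_simp
  have h2 : (xt ⬝ᵥ xt) * (xs ⬝ᵥ xs + 2 * (xs ⬝ᵥ xt) * α + (xt ⬝ᵥ xt) * α ^ 2)
      = (xt ⬝ᵥ xt) * 1 := by
    linear_combination ((xt ⬝ᵥ xt) * α + (xs ⬝ᵥ xt)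
      + Real.sqrt ((xt ⬝ᵥ xt) * (1 - xs ⬝ᵥ xs) + (xs ⬝ᵥ xt) ^ 2)) * haα + hsq
  have hq : xs ⬝ᵥ xs + 2 * (xs ⬝ᵥ xt) * α + (xt ⬝ᵥ xt) * α ^ 2 = 1 :=
    mul_left_cancel₀ ha.ne' h2
  have hsum1 : (xs + α • xt) ⬝ᵥ (xs + α • xt) = 1 := by
    simp only [add_dotProduct, dotProduct_add, smul_dotProduct, dotProduct_smul,
      smul_eq_mul, dotProduct_comm xt xs]
    linear_combination hq
  have hexp : ∀ i, (xs + α • xt - x i) ⬝ᵥ (xs + α • xt - x i)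
      = (1 - 2 * (x i ⬝ᵥ xs) + x i ⬝ᵥ x i) - 2 * α * (x i ⬝ᵥ xt) := by
    intro i
    simp only [sub_dotProduct, dotProduct_sub, add_dotProduct, dotProduct_add,
      smul_dotProduct, dotProduct_smul, smul_eq_mul, dotProduct_comm xt xs,
      dotProduct_comm xt (x i), dotProduct_comm xs (x i)]
    linear_combination hq
  have third : ∀ i, ω i * ((xs + α • xt - x i) ⬝ᵥ (xs + α • xt - x i)) ≥ ζs := by
    intro i
    rw [hexp i]
    have h3 : 0 ≤ ω i * (α * (-(x i ⬝ᵥ xt))) :=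
      mul_nonneg (hω i).le (mul_nonneg hα0 (by linarith [hsys i]))
    nlinarith [hfeas2 i]
  refine ⟨hα0, by rw [hsum1, Real.sqrt_one], third, ⟨⟨xs + α • xt, le_of_eq (by rw [hsum1, Real.sqrt_one]), rfl⟩, ?_⟩⟩
  rintro v ⟨y, hy1, rfl⟩
  have hyle : y ⬝ᵥ y ≤ 1 := by
    nlinarith [Real.sq_sqrt (hnn y), Real.sqrt_nonneg (y ⬝ᵥ y)]
  have hmem : (⨅ i, ω i * ((y - x i) ⬝ᵥ (y - x i))) ≤ ζs := by
    apply hopt.2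
    refine ⟨y, hy1, fun i => ?_⟩
    have h4 : (⨅ i, ω i * ((y - x i) ⬝ᵥ (y - x i))) ≤ ω i * ((y - x i) ⬝ᵥ (y - x i)) :=
      ciInf_le (Finite.bddBelow_range _) i
    have hexp2 : (y - x i) ⬝ᵥ (y - x i) = y ⬝ᵥ y - 2 * (x i ⬝ᵥ y) + x i ⬝ᵥ x i := by
      simp only [sub_dotProduct, dotProduct_sub, dotProduct_comm y (x i)]
      ring
    have h5 : ω i * ((y - x i) ⬝ᵥ (y - x i)) ≤ ω i * (1 - 2 * (x i ⬝ᵥ y) + x i ⬝ᵥ x i) := by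
      apply mul_le_mul_of_nonneg_left _ (hω i).le
      rw [hexp2]; linarith
    linarith
  exact hmem.trans (le_ciInf third)
end

section
/- Let n ≥ 40 be an integer and α ∈ (0, √n). Then ∫_0^{α/√n} (1-t²)^{(n-3)/2} dt > (1/(α√n)) (1 - e^{-0.475 α²}). -/
/-!
Put `a = α / √n` and `b = √(1 - a²)`. By concavity, `√(1 - t²)` lies above its chord
`1 - c t` on `[0, a]`, where `c = (1 - b) / a ≤ a`, so the integral is at least
`∫₀ᵃ (1 - c t)^(n-3) dt = (1 - b^(n-2)) / (c (n-2)) ≥ (1 - b^(n-2)) / (a (n-2))`.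
Finally `b^(n-2) ≤ exp (-a² (n-2) / 2) ≤ exp (-0.475 α²)` because `(n-2)/n ≥ 0.95` for `n ≥ 40`,
and `a (n-2) < a n = α √n`.
-/

open Real intervalIntegral

lemma sq_one_sub_mul_le_one_sub_sq {a b c t : ℝ} (ha : 0 < a) (hab : a ^ 2 + b ^ 2 = 1)
    (hc : 1 - c * a = b) (ht₀ : 0 ≤ t) (hta : t ≤ a) : (1 - c * t) ^ 2 ≤ 1 - t ^ 2 := by
  have hchord : a * (1 + c ^ 2) = 2 * c := by
    have : a * (a * (1 + c ^ 2) - 2 * c) = 0 := by rw [← hc] at hab; linear_combination hab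
    linarith [(mul_eq_zero.mp this).resolve_left ha.ne']
  -- `(1 - c t)² - (1 - t²) = (1 + c²) t (t - a)`
  nlinarith [mul_nonneg (mul_nonneg ht₀ (sub_nonneg.mpr hta)) (by positivity : (0 : ℝ) ≤ 1 + c ^ 2)]

lemma rpow_le_rpow_half_of_sq_le {x y r : ℝ} (hx : 0 ≤ x) (hxy : x ^ 2 ≤ y) (hr : 0 ≤ r) :
    x ^ r ≤ y ^ (r / 2) :=
  calc x ^ r = (x ^ 2) ^ (r / 2) := by
        rw [← rpow_natCast, ← rpow_mul hx, Nat.cast_ofNat, mul_div_cancel₀ r two_ne_zero]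
    _ ≤ y ^ (r / 2) := rpow_le_rpow (sq_nonneg x) hxy (by positivity)

lemma integral_one_sub_mul_rpow {c r : ℝ} (hc : c ≠ 0) (hr : -1 < r) (a : ℝ) :
    ∫ t in (0 : ℝ)..a, (1 - c * t) ^ r = (1 - (1 - c * a) ^ (r + 1)) / (c * (r + 1)) := by
  have hr' : r + 1 ≠ 0 := by linarith
  rw [integral_comp_sub_mul (fun x => x ^ r) hc, integral_rpow (Or.inl hr)]
  simp only [smul_eq_mul, mul_zero, sub_zero, one_rpow]
  field_simp

lemma div_le_integral_one_sub_sq_rpow {a b r : ℝ} (ha : 0 < a) (hb : 0 ≤ b)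
    (hab : a ^ 2 + b ^ 2 = 1) (hr : 0 ≤ r) :
    (1 - b ^ (r + 1)) / (a * (r + 1)) ≤ ∫ t in (0 : ℝ)..a, (1 - t ^ 2) ^ (r / 2) := by
  have hb₁ : b < 1 := by nlinarith
  set c := (1 - b) / a with hc_def
  have hc : 1 - c * a = b := by rw [hc_def, div_mul_cancel₀ _ ha.ne']; ring
  have hc₀ : 0 < c := div_pos (by linarith) ha
  have hca : c ≤ a := by rw [hc_def, div_le_iff₀ ha]; nlinarith
  have hpoint : ∀ t ∈ Set.Icc 0 a, (1 - c * t) ^ r ≤ (1 - t ^ 2) ^ (r / 2) := fun t ⟨ht₀, hta⟩ =>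
    rpow_le_rpow_half_of_sq_le (by nlinarith) (sq_one_sub_mul_le_one_sub_sq ha hab hc ht₀ hta) hr
  have hchord_int : IntervalIntegrable (fun t => (1 - c * t) ^ r) MeasureTheory.volume 0 a :=
    (Continuous.rpow_const (by fun_prop) fun _ => Or.inr hr).intervalIntegrable _ _
  have hint : IntervalIntegrable (fun t => (1 - t ^ 2) ^ (r / 2)) MeasureTheory.volume 0 a :=
    (Continuous.rpow_const (by fun_prop) fun _ => Or.inr (by positivity)).intervalIntegrable _ _
  calc (1 - b ^ (r + 1)) / (a * (r + 1))
      ≤ (1 - b ^ (r + 1)) / (c * (r + 1)) := by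
        gcongr
        linarith [rpow_le_one hb hb₁.le (by linarith : 0 ≤ r + 1)]
    _ = ∫ t in (0 : ℝ)..a, (1 - c * t) ^ r := by
        rw [integral_one_sub_mul_rpow hc₀.ne' (by linarith), hc]
    _ ≤ ∫ t in (0 : ℝ)..a, (1 - t ^ 2) ^ (r / 2) := integral_mono_on ha.le hchord_int hint hpoint

lemma sqrt_one_sub_rpow_le_exp {p : ℝ} (hp : 0 ≤ p) (x : ℝ) : √(1 - x) ^ p ≤ exp (-x * p / 2) :=
  calc √(1 - x) ^ p ≤ exp (-x / 2) ^ p := by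
        refine rpow_le_rpow (sqrt_nonneg _) ?_ hp
        rw [exp_half]
        exact sqrt_le_sqrt (by linarith [add_one_le_exp (-x)])
    _ = exp (-x * p / 2) := by rw [← exp_mul]; ring_nf

theorem stmt_10 (n : ℕ) (hn : 40 ≤ n) (α : ℝ) (hα : α ∈ Set.Ioo 0 (Real.sqrt n)) :
    (∫ t in (0 : ℝ)..(α / Real.sqrt n), (1 - t ^ 2) ^ (((n : ℝ) - 3) / 2)) >
      1 / (α * Real.sqrt n) * (1 - Real.exp (-0.475 * α ^ 2)) := by
  obtain ⟨hα₀, hαn⟩ := hα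
  have hn' : (40 : ℝ) ≤ n := by exact_mod_cast hn
  have hs : 0 < √n := hα₀.trans hαn
  set a := α / √n with ha_def
  have ha : 0 < a := div_pos hα₀ hs
  have han : a * n = α * √n := by
    rw [ha_def, div_mul_eq_mul_div, div_eq_iff hs.ne', mul_assoc, mul_self_sqrt (by positivity)]
  have ha₂ : a ^ 2 * n = α ^ 2 := by
    rw [ha_def, div_pow, sq_sqrt (by positivity), div_mul_cancel₀ _ (by positivity)]
  have ha₁ : a ^ 2 < 1 := pow_lt_one₀ ha.le ((div_lt_one hs).mpr hαn) two_ne_zero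
  set b := √(1 - a ^ 2)
  have hab : a ^ 2 + b ^ 2 = 1 := by rw [sq_sqrt (by linarith)]; ring
  have hbound := div_le_integral_one_sub_sq_rpow ha (sqrt_nonneg _) hab (r := n - 3) (by linarith)
  have hbexp : b ^ ((n : ℝ) - 3 + 1) ≤ exp (-0.475 * α ^ 2) :=
    (sqrt_one_sub_rpow_le_exp (by linarith) _).trans (exp_le_exp.mpr (by nlinarith))
  have hE : exp (-0.475 * α ^ 2) < 1 := exp_lt_one_iff.mpr (by nlinarith)
  have hden₀ : 0 < a * ((n : ℝ) - 3 + 1) := mul_pos ha (by linarith)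
  have hden : a * ((n : ℝ) - 3 + 1) < α * √n := by rw [← han]; nlinarith
  calc 1 / (α * √n) * (1 - exp (-0.475 * α ^ 2))
      = (1 - exp (-0.475 * α ^ 2)) / (α * √n) := by ring
    _ < (1 - exp (-0.475 * α ^ 2)) / (a * ((n : ℝ) - 3 + 1)) :=
        div_lt_div_of_pos_left (by linarith) hden₀ hden
    _ ≤ (1 - b ^ ((n : ℝ) - 3 + 1)) / (a * ((n : ℝ) - 3 + 1)) :=
        div_le_div_of_nonneg_right (by linarith) hden₀.le
    _ ≤ _ := hbound
end

section
/- Let n ≥ 40 be an integer and α ∈ (0, √n). Then ∫_{α/√n}^{1} (1-t²)^{(n-3)/2} dt < (0.16 e^{-0.4625 α²}) / (√n (1 - e^{-0.1462 α})). -/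
/-!
Since `1 - t² ≤ exp (-t²)`, the integrand is at most the Gaussian `exp (-m t²)` with
`m = (n - 3) / 2`, and on `[a, ∞)` the Gaussian is dominated by `(t / a) exp (-m t²)`, which
integrates in closed form: `∫_a^1 (1 - t²)^m dt ≤ exp (-m a²) / (2 m a)`. With `a = α / √n`
this is `√n exp (-(n - 3) α² / (2n)) / ((n - 3) α)`, and for `n ≥ 40` the numerical constants
follow from `(n - 3) / (2n) ≥ 0.4625`, `0.16 (n - 3) ≥ 0.1462 n` and `1 - e^{-x} < x`.
-/

open Real

lemma one_sub_sq_rpow_le_exp {t m : ℝ} (ht : t ^ 2 ≤ 1) (hm : 0 ≤ m) :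
    (1 - t ^ 2) ^ m ≤ exp (-(m * t ^ 2)) :=
  calc (1 - t ^ 2) ^ m ≤ exp (-t ^ 2) ^ m :=
        rpow_le_rpow (by linarith) (by linarith [add_one_le_exp (-t ^ 2)]) hm
    _ = exp (-(m * t ^ 2)) := by rw [← exp_mul]; ring_nf

lemma integral_exp_neg_mul_sq_le {a b m : ℝ} (ha : 0 < a) (hab : a ≤ b) (hm : 0 < m) :
    ∫ t in a..b, exp (-(m * t ^ 2)) ≤ exp (-(m * a ^ 2)) / (2 * m * a) := by
  have hderiv : ∀ t, HasDerivAt (fun u => -exp (-(m * u ^ 2)) / (2 * m * a))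
      (t / a * exp (-(m * t ^ 2))) t := by
    intro t
    refine ((((hasDerivAt_pow 2 t).const_mul m).neg.exp.neg).div_const (2 * m * a)).congr_deriv ?_
    simp only [Pi.neg_apply]
    field_simp
    ring
  have hgauss : Continuous fun t => exp (-(m * t ^ 2)) := by fun_prop
  have hcont : Continuous fun t => t / a * exp (-(m * t ^ 2)) := by fun_prop
  calc ∫ t in a..b, exp (-(m * t ^ 2))
      ≤ ∫ t in a..b, t / a * exp (-(m * t ^ 2)) := by
        refine intervalIntegral.integral_mono_on hab (hgauss.intervalIntegrable a b)
          (hcont.intervalIntegrable a b) fun t ht => ?_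
        exact le_mul_of_one_le_left (exp_pos _).le ((one_le_div ha).mpr ht.1)
    _ = exp (-(m * a ^ 2)) / (2 * m * a) - exp (-(m * b ^ 2)) / (2 * m * a) := by
        rw [intervalIntegral.integral_eq_sub_of_hasDerivAt (fun t _ => hderiv t)
          (hcont.intervalIntegrable a b)]
        ring
    _ ≤ exp (-(m * a ^ 2)) / (2 * m * a) := by
        have : 0 < exp (-(m * b ^ 2)) / (2 * m * a) := by positivity
        linarith

lemma integral_one_sub_sq_rpow_le {a m : ℝ} (ha : 0 < a) (ha1 : a ≤ 1) (hm : 0 < m) :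
    ∫ t in a..1, (1 - t ^ 2) ^ m ≤ exp (-(m * a ^ 2)) / (2 * m * a) := by
  have hcont : Continuous fun t : ℝ => (1 - t ^ 2) ^ m :=
    (by fun_prop : Continuous fun t : ℝ => 1 - t ^ 2).rpow_const fun _ => Or.inr hm.le
  refine le_trans ?_ (integral_exp_neg_mul_sq_le ha ha1 hm)
  refine intervalIntegral.integral_mono_on ha1 (hcont.intervalIntegrable a 1)
    ((by fun_prop : Continuous fun t => exp (-(m * t ^ 2))).intervalIntegrable a 1)
    fun t ht => one_sub_sq_rpow_le_exp ?_ hm.le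
  nlinarith [ht.1, ht.2]

lemma exponent_le_of_forty_le {x : ℝ} (hx : 40 ≤ x) (α : ℝ) :
    0.4625 * α ^ 2 ≤ (x - 3) / 2 * (α / √x) ^ 2 := by
  rw [div_pow, sq_sqrt (by linarith), mul_div_assoc', le_div_iff₀ (by linarith)]
  nlinarith [mul_nonneg (by linarith : (0 : ℝ) ≤ 0.075 * x - 3) (sq_nonneg α)]

lemma sqrt_mul_one_sub_exp_lt_of_forty_le {x α : ℝ} (hx : 40 ≤ x) (hα : 0 < α) :
    √x * (1 - exp (-0.1462 * α)) < 0.16 * (2 * ((x - 3) / 2) * (α / √x)) := by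
  have hs : 0 < √x := sqrt_pos.mpr (by linarith)
  have h : 1 - exp (-0.1462 * α) < 0.1462 * α := by
    have := one_sub_lt_exp_neg (by positivity : (0.1462 : ℝ) * α ≠ 0)
    rw [← neg_mul] at this
    linarith
  rw [mul_div_assoc', mul_div_assoc', lt_div_iff₀ hs]
  calc √x * (1 - exp (-0.1462 * α)) * √x = √x ^ 2 * (1 - exp (-0.1462 * α)) := by ring
    _ < √x ^ 2 * (0.1462 * α) := by gcongr
    _ ≤ 0.16 * (2 * ((x - 3) / 2) * α) := by
      rw [sq_sqrt (by linarith)]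
      nlinarith [mul_nonneg (by linarith : (0 : ℝ) ≤ 0.0138 * x - 0.48) hα.le]

theorem stmt_11 (n : ℕ) (hn : 40 ≤ n) (α : ℝ) (hα : α ∈ Set.Ioo 0 (Real.sqrt n)) :
    (∫ t in (α / Real.sqrt n)..1, (1 - t ^ 2) ^ (((n : ℝ) - 3) / 2)) <
      0.16 * Real.exp (-0.4625 * α ^ 2) /
        (Real.sqrt n * (1 - Real.exp (-0.1462 * α))) := by
  obtain ⟨hα0, hαs⟩ := hα
  have hn40 : (40 : ℝ) ≤ n := by exact_mod_cast hn
  have hs : 0 < √(n : ℝ) := sqrt_pos.mpr (by linarith)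
  have hm : 0 < ((n : ℝ) - 3) / 2 := by linarith
  have hD : 0 < 1 - exp (-0.1462 * α) := by
    linarith [exp_lt_one_iff.mpr (by linarith : -0.1462 * α < 0)]
  calc ∫ t in (α / √n)..1, (1 - t ^ 2) ^ (((n : ℝ) - 3) / 2)
      ≤ exp (-((n - 3) / 2 * (α / √n) ^ 2)) / (2 * ((n - 3) / 2) * (α / √n)) :=
        integral_one_sub_sq_rpow_le (div_pos hα0 hs) ((div_le_one hs).mpr hαs.le) hm
    _ ≤ exp (-0.4625 * α ^ 2) / (2 * ((n - 3) / 2) * (α / √n)) := by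
        gcongr
        linarith [exponent_le_of_forty_le hn40 α]
    _ = 0.16 * exp (-0.4625 * α ^ 2) / (0.16 * (2 * ((n - 3) / 2) * (α / √n))) := by
        rw [mul_div_mul_left _ _ (by norm_num)]
    _ < 0.16 * exp (-0.4625 * α ^ 2) / (√n * (1 - exp (-0.1462 * α))) :=
        div_lt_div_of_pos_left (by positivity) (by positivity)
          (sqrt_mul_one_sub_exp_lt_of_forty_le hn40 hα0)
end

section
/- For all α > 0, 0.08 α e^{-0.0125 α²}(1 - 2e^{-0.45 α²}) < (1 - e^{-0.1462 α})(1 - e^{-0.475 α²}). -/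
theorem stmt_12 (α : ℝ) (hα : 0 < α) :
    0.08 * α * Real.exp (-0.0125 * α ^ 2) * (1 - 2 * Real.exp (-0.45 * α ^ 2)) <
      (1 - Real.exp (-0.1462 * α)) * (1 - Real.exp (-0.475 * α ^ 2)) := by
  have hα2 : 0 < α ^ 2 := by positivity
  have h1 : Real.exp (-0.1462 * α) < 1 := by
    rw [Real.exp_lt_one_iff]; nlinarith
  have h2 : Real.exp (-0.475 * α ^ 2) < 1 := by
    rw [Real.exp_lt_one_iff]; nlinarith
  have hRpos : 0 < (1 - Real.exp (-0.1462 * α)) * (1 - Real.exp (-0.475 * α ^ 2)) := by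
    nlinarith
  by_cases hc : 1 - 2 * Real.exp (-0.45 * α ^ 2) ≤ 0
  · have hL : 0.08 * α * Real.exp (-0.0125 * α ^ 2) *
        (1 - 2 * Real.exp (-0.45 * α ^ 2)) ≤ 0 := by
      apply mul_nonpos_of_nonneg_of_nonpos _ hc
      positivity
    linarith
  · push_neg at hc
    set E1 := Real.exp (-0.0125 * α ^ 2) with hE1def
    set E2 := Real.exp (-0.1462 * α) with hE2def
    have hE1pos : 0 < E1 := Real.exp_pos _
    have hE2pos : 0 < E2 := Real.exp_pos _
    have m1 : E1 * Real.exp (0.0125 * α ^ 2) = 1 := by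
      rw [hE1def, ← Real.exp_add]; norm_num
    have m2 : E2 * Real.exp (0.1462 * α) = 1 := by
      rw [hE2def, ← Real.exp_add]; norm_num
    have b1 : 0.0125 * α ^ 2 + 1 < Real.exp (0.0125 * α ^ 2) :=
      Real.add_one_lt_exp (by positivity)
    have b2 : 0.1462 * α + 1 < Real.exp (0.1462 * α) :=
      Real.add_one_lt_exp (by positivity)
    have hE1b : E1 * (0.0125 * α ^ 2 + 1) < 1 := by
      calc E1 * (0.0125 * α ^ 2 + 1) < E1 * Real.exp (0.0125 * α ^ 2) := by
            exact (mul_lt_mul_iff_right₀ hE1pos).mpr b1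
        _ = 1 := m1
    have hE2b : E2 * (0.1462 * α + 1) < 1 := by
      calc E2 * (0.1462 * α + 1) < E2 * Real.exp (0.1462 * α) := by
            exact (mul_lt_mul_iff_right₀ hE2pos).mpr b2
        _ = 1 := m2
    have hp1 : (0:ℝ) < 0.0125 * α ^ 2 + 1 := by positivity
    have hp2 : (0:ℝ) < 0.08 * α * (0.1462 * α + 1) := by positivity
    have key : 0.08 * α * E1 < 1 - E2 := by
      nlinarith [mul_lt_mul_of_pos_left hE2b hp1,
        mul_lt_mul_of_pos_left hE1b hp2,
        mul_nonneg hα.le (sq_nonneg (α - 3.2)),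
        mul_pos hE1pos hE2pos, hα.le]
    have hA3 : Real.exp (-0.475 * α ^ 2) ≤ Real.exp (-0.45 * α ^ 2) := by
      apply Real.exp_le_exp.mpr; nlinarith
    have hApos : 0 < Real.exp (-0.45 * α ^ 2) := Real.exp_pos _
    have hA3pos : 0 < Real.exp (-0.475 * α ^ 2) := Real.exp_pos _
    nlinarith [mul_pos (sub_pos.mpr h1) hApos, mul_lt_mul_of_pos_right key hc,
      mul_pos (sub_pos.mpr h1) (sub_pos.mpr h2)]
end

section
/- Let n ≥ 2 and let S(n,·) : (0,√n) → (0, 1/2) be the strictly decreasing function S(n,α) = (∫_{α/√n}^{1}(1-t²)^{(n-3)/2} dt)/(2∫_0^1(1-t²)^{(n-3)/2} dt), with inverse S^{-1}(n,·). Then for every β ∈ (0, 0.5), S^{-1}(n,β) < √((20/9) ln(1/β)). -/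
/-!
With `p = (n - 1) / 2` and `x = α / √n`, the numerator is at most
`x⁻¹ ∫_x^1 t (1 - t²)^(p-1) dt = (1 - x²)^p / (2 p x) ≤ e^(-p x²) / (2 p x)`, and the
denominator is at least `4 / (3 √p)`: for `p ≥ 1` Bernoulli gives `(1 - t²)^(p-1) ≥ 1 - p t²`,
which integrates to `2 / (3 √p)` over `[0, 1/√p]`, and for `p ≤ 1` the integrand is at least `1`.
Since `p x² > α²/2 - 1/2` and `√p x ≥ α/2`, this yields `S(n, α) < e^(-α²/2)` once `16 α² > 9e`,
a threshold below `(20/9) log 2`; below that threshold `e^(-9α²/20) ≥ 1/2 > β` anyway.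
-/

open MeasureTheory intervalIntegral Set Real

theorem intervalIntegrable_one_sub_sq_rpow {r : ℝ} (hr : -1 < r) :
    IntervalIntegrable (fun t : ℝ => (1 - t ^ 2) ^ r) volume 0 1 := by
  have hsing : IntervalIntegrable (fun t : ℝ => (1 - t) ^ r) volume 0 1 := by
    simpa using ((intervalIntegrable_rpow' (a := 0) (b := 1) hr).comp_sub_left 1).symm
  have hcont : ContinuousOn (fun t : ℝ => (1 + t) ^ r) (uIcc 0 1) := by
    intro t ht
    rw [uIcc_of_le zero_le_one] at ht
    have : (1 : ℝ) + t ≠ 0 := by linarith [ht.1]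
    exact ((continuous_const.add continuous_id).continuousAt.rpow_const
      (Or.inl this)).continuousWithinAt
  refine (hsing.mul_continuousOn hcont).congr fun t ht => ?_
  rw [uIoc_of_le zero_le_one] at ht
  rw [← mul_rpow (by linarith [ht.2]) (by linarith [ht.1])]
  ring_nf

theorem integral_mul_one_sub_sq_rpow {p c : ℝ} (hp : 0 < p) (hc0 : 0 ≤ c) (hc : c ≤ 1) :
    ∫ t in c..1, t * (1 - t ^ 2) ^ (p - 1) = (1 - c ^ 2) ^ p / (2 * p) := by
  have hcont : ContinuousOn (fun t : ℝ => (1 - t ^ 2) ^ p / -(2 * p)) (Icc c 1) :=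
    (((continuous_const.sub (continuous_pow 2)).rpow_const fun _ => Or.inr hp.le).div_const
      _).continuousOn
  have hderiv : ∀ t ∈ Ioo c 1, HasDerivAt (fun t : ℝ => (1 - t ^ 2) ^ p / -(2 * p))
      (t * (1 - t ^ 2) ^ (p - 1)) t := by
    intro t ht
    have hbase : (1 : ℝ) - t ^ 2 ≠ 0 := by nlinarith [ht.1, ht.2]
    refine ((((hasDerivAt_pow 2 t).const_sub 1).rpow_const (p := p)
      (Or.inl hbase)).div_const (-(2 * p))).congr_deriv ?_
    field_simp
    ring
  have hint : IntervalIntegrable (fun t : ℝ => t * (1 - t ^ 2) ^ (p - 1)) volume c 1 :=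
    intervalIntegrable_deriv_of_nonneg (hcont.mono (by rw [uIcc_of_le hc]))
      (by simpa [hc] using hderiv) fun t ht => by
        simp only [min_eq_left hc, max_eq_right hc] at ht
        exact mul_nonneg (by linarith [ht.1]) (rpow_nonneg (by nlinarith [ht.1, ht.2]) _)
  rw [integral_eq_sub_of_hasDerivAt_of_le hc hcont hderiv hint]
  simp only [one_pow, sub_self, zero_rpow hp.ne', zero_div, zero_sub]
  ring

theorem integral_one_sub_sq_rpow_le_s14 {p c : ℝ} (hp : 0 < p) (hc0 : 0 < c) (hc1 : c ≤ 1) :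
    ∫ t in c..1, (1 - t ^ 2) ^ (p - 1) ≤ exp (-(p * c ^ 2)) / (2 * p * c) := by
  have hint : IntervalIntegrable (fun t : ℝ => (1 - t ^ 2) ^ (p - 1)) volume c 1 :=
    (intervalIntegrable_one_sub_sq_rpow (by linarith)).mono_set <| by
      rw [uIcc_of_le hc1, uIcc_of_le zero_le_one]; exact Icc_subset_Icc hc0.le le_rfl
  calc ∫ t in c..1, (1 - t ^ 2) ^ (p - 1)
      ≤ ∫ t in c..1, c⁻¹ * (t * (1 - t ^ 2) ^ (p - 1)) := by
        refine integral_mono_on hc1 hint ((hint.continuousOn_mul continuousOn_id).const_mul _)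
          fun t ht => ?_
        have hct : 1 ≤ c⁻¹ * t := by rw [inv_mul_eq_div, one_le_div hc0]; exact ht.1
        rw [← mul_assoc]
        exact le_mul_of_one_le_left (rpow_nonneg (by nlinarith [ht.1, ht.2]) _) hct
    _ = c⁻¹ * ((1 - c ^ 2) ^ p / (2 * p)) := by
        rw [intervalIntegral.integral_const_mul, integral_mul_one_sub_sq_rpow hp hc0.le hc1]
    _ ≤ c⁻¹ * (exp (-c ^ 2) ^ p / (2 * p)) := by
        gcongr
        · nlinarith
        · linarith [add_one_le_exp (-c ^ 2)]
    _ = exp (-(p * c ^ 2)) / (2 * p * c) := by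
        rw [← exp_mul]
        field_simp

theorem one_le_integral_one_sub_sq_rpow {p : ℝ} (hp0 : 0 < p) (hp1 : p ≤ 1) :
    1 ≤ ∫ t in (0 : ℝ)..1, (1 - t ^ 2) ^ (p - 1) := by
  have h := integral_mono_on_of_le_Ioo zero_le_one intervalIntegrable_const
    (intervalIntegrable_one_sub_sq_rpow (r := p - 1) (by linarith)) fun t ht =>
      one_le_rpow_of_pos_of_le_one_of_nonpos (by nlinarith [ht.1, ht.2]) (by nlinarith)
        (by linarith)
  simpa using h

theorem one_sub_mul_sq_le_one_sub_sq_rpow {p t : ℝ} (hp : 1 ≤ p) (ht : t ^ 2 ≤ 1) :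
    1 - p * t ^ 2 ≤ (1 - t ^ 2) ^ (p - 1) :=
  calc 1 - p * t ^ 2 = 1 + p * -t ^ 2 := by ring
    _ ≤ (1 + -t ^ 2) ^ p := one_add_mul_self_le_rpow_one_add (by linarith) hp
    _ = (1 - t ^ 2) ^ p := by ring_nf
    _ ≤ (1 - t ^ 2) ^ (p - 1) :=
      rpow_le_rpow_of_exponent_ge' (by linarith) (by nlinarith) (by linarith) (by linarith)

theorem two_div_three_sqrt_le_integral_one_sub_sq_rpow {p : ℝ} (hp : 1 ≤ p) :
    2 / (3 * √p) ≤ ∫ t in (0 : ℝ)..1, (1 - t ^ 2) ^ (p - 1) := by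
  set y := (√p)⁻¹ with hy
  have hsp : 1 ≤ √p := one_le_sqrt.mpr hp
  have hy0 : 0 < y := by positivity
  have hy1 : y ≤ 1 := inv_le_one_of_one_le₀ hsp
  have hpy : p * y ^ 2 = 1 := by
    rw [hy, inv_pow, sq_sqrt (by linarith), mul_inv_cancel₀ (by linarith)]
  have hcont : Continuous fun t : ℝ => (1 - t ^ 2) ^ (p - 1) :=
    (continuous_const.sub (continuous_pow 2)).rpow_const fun _ => Or.inr (by linarith)
  have hpoly : Continuous fun t : ℝ => 1 - p * t ^ 2 := by fun_prop
  calc 2 / (3 * √p) = y - p * y ^ 2 * y / 3 := by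
        rw [hpy, hy]
        field_simp
        ring
    _ = ∫ t in (0 : ℝ)..y, (1 - p * t ^ 2) := by
        norm_num [integral_pow]
        ring
    _ ≤ ∫ t in (0 : ℝ)..y, (1 - t ^ 2) ^ (p - 1) :=
        integral_mono_on hy0.le (hpoly.intervalIntegrable _ _) (hcont.intervalIntegrable _ _)
          fun t ht => one_sub_mul_sq_le_one_sub_sq_rpow hp (by nlinarith [ht.1, ht.2])
    _ ≤ ∫ t in (0 : ℝ)..1, (1 - t ^ 2) ^ (p - 1) :=
        integral_mono_interval le_rfl hy0.le hy1
          (ae_restrict_of_forall_mem measurableSet_Ioc fun t ht =>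
            rpow_nonneg (by nlinarith [ht.1, ht.2]) _)
          (hcont.intervalIntegrable _ _)

/-- `S(n, α) = capRatio ((n - 1) / 2) (α / √n)`. -/
noncomputable def capRatio (p x : ℝ) : ℝ :=
  (∫ t in x..1, (1 - t ^ 2) ^ (p - 1)) / (2 * ∫ t in (0 : ℝ)..1, (1 - t ^ 2) ^ (p - 1))

theorem capRatio_le {p x : ℝ} (hp : 4 / 9 ≤ p) (hx0 : 0 < x) (hx1 : x ≤ 1) :
    capRatio p x ≤ 3 * exp (-(p * x ^ 2)) / (8 * √p * x) := by
  have hsp : 0 < √p := sqrt_pos.mpr (by linarith)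
  have hI : 2 / (3 * √p) ≤ ∫ t in (0 : ℝ)..1, (1 - t ^ 2) ^ (p - 1) := by
    rcases le_total p 1 with hp1 | hp1
    · refine le_trans ?_ (one_le_integral_one_sub_sq_rpow (by linarith) hp1)
      rw [div_le_one (by positivity)]
      nlinarith [sq_sqrt (show 0 ≤ p by linarith)]
    · exact two_div_three_sqrt_le_integral_one_sub_sq_rpow hp1
  calc capRatio p x ≤ (exp (-(p * x ^ 2)) / (2 * p * x)) / (2 * (2 / (3 * √p))) :=
        div_le_div₀ (by positivity) (integral_one_sub_sq_rpow_le_s14 (by linarith) hx0 hx1)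
          (by positivity) (by linarith)
    _ = 3 * exp (-(p * x ^ 2)) / (8 * √p * x) := by
        field_simp
        rw [sq_sqrt (by linarith)]
        ring

theorem capRatio_sphere_lt_exp {n : ℕ} (hn : 2 ≤ n) {α : ℝ} (hα0 : 0 < α) (hαn : α ^ 2 < n)
    (hα : 9 * exp 1 < 16 * α ^ 2) :
    capRatio (((n : ℝ) - 1) / 2) (α / √n) < exp (-(α ^ 2 / 2)) := by
  have hn' : (2 : ℝ) ≤ n := by exact_mod_cast hn
  set p : ℝ := ((n : ℝ) - 1) / 2 with hp
  have hp0 : 1 / 2 ≤ p := by rw [hp]; linarith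
  set x := α / √n with hx
  have hsn : 0 < √(n : ℝ) := sqrt_pos.mpr (by linarith)
  have hx0 : 0 < x := div_pos hα0 hsn
  have hx1 : x ≤ 1 := by
    rw [div_le_one hsn]
    exact (lt_sqrt hα0.le).mpr hαn |>.le
  have hpx : p * x ^ 2 = α ^ 2 / 2 - α ^ 2 / (2 * n) := by
    rw [hx, div_pow, sq_sqrt (by linarith)]
    field_simp
    ring
  have hexp : exp (-(p * x ^ 2)) < exp (1 / 2) * exp (-(α ^ 2 / 2)) := by
    rw [← exp_add, exp_lt_exp, hpx]
    have : α ^ 2 / (2 * n) < 1 / 2 := by rw [div_lt_iff₀ (by linarith)]; linarith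
    linarith
  have hden : α / 2 ≤ √p * x := by
    rw [← sqrt_sq hx0.le, ← sqrt_mul (by positivity), le_sqrt (by positivity) (by positivity),
      hpx]
    have : α ^ 2 / (2 * n) ≤ α ^ 2 / 4 :=
      div_le_div_of_nonneg_left (by positivity) (by norm_num) (by linarith)
    linarith
  have hnum : 3 * exp (1 / 2) < 4 * α := by
    have hsq : exp (1 / 2) ^ 2 = exp 1 := by rw [← exp_nat_mul]; norm_num
    nlinarith [exp_pos (1 / 2)]
  calc capRatio p x ≤ 3 * exp (-(p * x ^ 2)) / (8 * √p * x) :=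
        capRatio_le (by linarith) hx0 hx1
    _ < exp (-(α ^ 2 / 2)) := by
        rw [div_lt_iff₀ (by positivity)]
        calc 3 * exp (-(p * x ^ 2)) < 3 * exp (1 / 2) * exp (-(α ^ 2 / 2)) := by
              linarith
          _ ≤ 4 * α * exp (-(α ^ 2 / 2)) := by gcongr
          _ ≤ exp (-(α ^ 2 / 2)) * (8 * √p * x) := by nlinarith [exp_pos (-(α ^ 2 / 2))]

theorem stmt_14 (n : ℕ) (hn : 2 ≤ n) (β : ℝ) (hβ : β ∈ Set.Ioo (0 : ℝ) 0.5)
    (α : ℝ) (hα : α ∈ Set.Ioo 0 (Real.sqrt n))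
    (hSα : (∫ t in (α / Real.sqrt n)..1, (1 - t ^ 2) ^ (((n : ℝ) - 3) / 2)) /
        (2 * ∫ t in (0 : ℝ)..1, (1 - t ^ 2) ^ (((n : ℝ) - 3) / 2)) = β) :
    α < Real.sqrt (20 / 9 * Real.log (1 / β)) := by
  obtain ⟨hβ0, hβ1⟩ := hβ
  obtain ⟨hα0, hαn⟩ := hα
  suffices hβα : β < exp (-(9 / 20 * α ^ 2)) by
    rw [lt_sqrt hα0.le, one_div, log_inv]
    have := (log_lt_iff_lt_exp hβ0).mpr hβα
    linarith
  rcases le_or_gt (α ^ 2) (20 / 9 * log 2) with hsmall | hlarge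
  · calc β < 1 / 2 := by norm_num at hβ1 ⊢; linarith
      _ = exp (-log 2) := by rw [exp_neg, exp_log two_pos, one_div]
      _ ≤ exp (-(9 / 20 * α ^ 2)) := by gcongr; linarith
  · have hαe : 9 * exp 1 < 16 * α ^ 2 := by
      linarith [exp_one_lt_d9, log_two_gt_d9]
    have hS : capRatio (((n : ℝ) - 1) / 2) (α / √n) = β := by
      rw [← hSα, capRatio, show ((n : ℝ) - 1) / 2 - 1 = ((n : ℝ) - 3) / 2 by ring]
    calc β < exp (-(α ^ 2 / 2)) :=
          hS ▸ capRatio_sphere_lt_exp hn hα0 ((lt_sqrt hα0.le).mp hαn) hαe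
      _ ≤ exp (-(9 / 20 * α ^ 2)) := by gcongr; nlinarith
end

section
/- Let x^1,…,x^m ∈ ℝ^n, ω_i > 0, and let (x*, ζ*) be an optimal solution of the relaxation max{ζ : ω_i(1 - 2(x^i)^T x + ‖x^i‖²) ≥ ζ, ‖x‖ ≤ 1}. Suppose x̃ ∈ ℝ^n satisfies ‖x̃‖ = 1 and (x^i)^T x̃ < (α/√n)‖x^i‖ for all i with ‖x^i‖ > 0, where 0 < α < √n. Then min_{i=1,…,m} ω_i ‖x̃ - x^i‖² > ((1 - α/√n)/2) ζ*. -/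
set_option maxHeartbeats 800000


open Matrix

theorem stmt_16 (n m : ℕ) (x : Fin m → (Fin n → ℝ)) (ω : Fin m → ℝ) (hω : ∀ i, 0 < ω i)
    (xs : Fin n → ℝ) (ζs : ℝ)
    (hopt : IsGreatest {ζ : ℝ | ∃ y : Fin n → ℝ, Real.sqrt (y ⬝ᵥ y) ≤ 1 ∧
      ∀ i, ω i * (1 - 2 * (x i ⬝ᵥ y) + x i ⬝ᵥ x i) ≥ ζ} ζs)
    (hfeas : Real.sqrt (xs ⬝ᵥ xs) ≤ 1 ∧
      ∀ i, ω i * (1 - 2 * (x i ⬝ᵥ xs) + x i ⬝ᵥ x i) ≥ ζs)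
    (α : ℝ) (hα : α ∈ Set.Ioo 0 (Real.sqrt n))
    (xt : Fin n → ℝ) (hxt : Real.sqrt (xt ⬝ᵥ xt) = 1)
    (hang : ∀ i, 0 < Real.sqrt (x i ⬝ᵥ x i) →
      x i ⬝ᵥ xt < α / Real.sqrt n * Real.sqrt (x i ⬝ᵥ x i)) :
    ∀ i, ω i * ((xt - x i) ⬝ᵥ (xt - x i)) > (1 - α / Real.sqrt n) / 2 * ζs := by
  obtain ⟨hxs1, hζ⟩ := hfeas
  obtain ⟨hα0, hαn⟩ := hα
  intro i
  have hn : 0 < Real.sqrt n := lt_trans hα0 hαn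
  set t := α / Real.sqrt n with htdef
  have ht0 : 0 < t := div_pos hα0 hn
  have ht1 : t < 1 := (div_lt_one hn).mpr hαn
  -- basic dot product facts
  have hself : ∀ v : Fin n → ℝ, 0 ≤ v ⬝ᵥ v := fun v =>
    Finset.sum_nonneg fun j _ => mul_self_nonneg _
  have hxt2 : xt ⬝ᵥ xt = 1 := by
    nlinarith [Real.sq_sqrt (hself xt), hxt, Real.sqrt_nonneg (xt ⬝ᵥ xt)]
  have hxs2 : xs ⬝ᵥ xs ≤ 1 := by
    nlinarith [Real.sq_sqrt (hself xs), Real.sqrt_nonneg (xs ⬝ᵥ xs)]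
  set a := x i ⬝ᵥ x i with hadef
  set b := x i ⬝ᵥ xt with hbdef
  set c := x i ⬝ᵥ xs with hcdef
  have ha : 0 ≤ a := hself _
  -- Cauchy–Schwarz
  have hcs : ∀ v : Fin n → ℝ, (x i ⬝ᵥ v) ^ 2 ≤ a * (v ⬝ᵥ v) := by
    intro v
    have h := Finset.sum_mul_sq_le_sq_mul_sq Finset.univ (x i) v
    have e1 : ∑ j, x i j * v j = x i ⬝ᵥ v := rfl
    have e2 : ∑ j, x i j ^ 2 = a := by
      simp only [hadef, dotProduct, sq]
    have e3 : ∑ j, v j ^ 2 = v ⬝ᵥ v := by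
      simp only [dotProduct, sq]
    rw [e1, e2, e3] at h
    exact h
  have hc2 : c ^ 2 ≤ a := by
    have := hcs xs
    nlinarith [sq_nonneg c]
  -- expansion
  have hexp : (xt - x i) ⬝ᵥ (xt - x i) = 1 - 2 * b + a := by
    have hcomm : x i ⬝ᵥ xt = xt ⬝ᵥ x i := dotProduct_comm _ _
    simp only [sub_dotProduct, dotProduct_sub]
    rw [hxt2, ← hbdef, ← hadef, ← hcomm, ← hbdef]
    ring
  have hζi : ζs ≤ ω i * (1 - 2 * c + a) := hζ i
  have hωi := hω i
  rw [hexp]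
  set r := Real.sqrt a with hrdef
  have hr0 : 0 ≤ r := Real.sqrt_nonneg a
  have hr2 : r ^ 2 = a := Real.sq_sqrt ha
  have hcr : -c ≤ r := by
    nlinarith [abs_nonneg c, sq_abs c, neg_abs_le c, Real.sqrt_le_sqrt hc2,
      Real.sqrt_sq_eq_abs c]
  rcases eq_or_lt_of_le hr0 with hr | hrpos
  · -- ‖x i‖ = 0
    have ha0 : a = 0 := by nlinarith
    have hb0 : b = 0 := by
      have := hcs xt
      rw [hxt2, ha0] at this
      nlinarith [sq_nonneg b]
    have hc0 : c = 0 := by nlinarith [sq_nonneg c]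
    rw [hb0, ha0]
    rw [hc0, ha0] at hζi
    nlinarith
  · -- ‖x i‖ > 0
    have hb : b < t * r := hang i (by rw [← hrdef]; exact hrpos)
    have h2r : 2 * r ≤ 1 + a := by nlinarith [sq_nonneg (r - 1), hr2]
    nlinarith [mul_lt_mul_of_pos_left hb hωi,
      mul_nonneg (le_of_lt ht0) (mul_nonneg (le_of_lt hωi) (by nlinarith : (0:ℝ) ≤ 1 + a - 2 * r)),
      mul_nonneg (by linarith : (0:ℝ) ≤ 1 - t) (mul_nonneg (le_of_lt hωi) (by linarith : 0 ≤ r + c))]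
end

section
/- Define g(t) = t - Σ_{i=1}^n 2a_i² / (1 + √(1 + 4a_i² γ(t))) for t ∈ (0,1), where γ(t) = 2β(t) + t β(t)² and β(t) = (1-√(1-t))/(t√(1-t)), and a_1,…,a_n are nonzero reals. Then lim_{t→0^+} g(t) = -(1/2) Σ_{i=1}^n (√(1+4a_i²) - 1) < 0 and lim_{t→1^-} g(t) = 1 > 0; consequently (by continuity) there exists t* ∈ (0,1) with g(t*) = 0. -/
/-!
Rationalising gives `β t = 1 / ((1 + √(1 - t)) √(1 - t))`, so `β → 1/2` and `γ → 1` as `t → 0⁺`,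
while `β`, hence `γ`, blows up as `t → 1⁻`. Each summand of `g` is `2a²/(1 + √(1 + 4a²γ))`,
which is continuous in `γ`, equals `(√(1 + 4a²) - 1)/2` at `γ = 1` and vanishes as `γ → ∞`.
So `g` goes from a negative limit at `0⁺` to the limit `1` at `1⁻`, and the intermediate value
theorem on the open interval gives a zero.
-/

open Filter Set Topology

theorem exists_mem_Ioo_eq_of_tendsto {α δ : Type*} [ConditionallyCompleteLinearOrder α]
    [TopologicalSpace α] [OrderTopology α] [DenselyOrdered α] [LinearOrder δ]
    [TopologicalSpace δ] [OrderClosedTopology δ] {f : α → δ} {a b : α} {u v y : δ} (hab : a < b)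
    (hf : ContinuousOn f (Ioo a b)) (ha : Tendsto f (𝓝[>] a) (𝓝 u))
    (hb : Tendsto f (𝓝[<] b) (𝓝 v)) (huy : u < y) (hyv : y < v) :
    ∃ c ∈ Ioo a b, f c = y := by
  have := left_nhdsWithin_Ioo_neBot hab
  have := right_nhdsWithin_Ioo_neBot hab
  exact isPreconnected_Ioo.intermediate_value_Ioo (l₁ := 𝓝[Ioo a b] a) (l₂ := 𝓝[Ioo a b] b)
    inf_le_right inf_le_right hf (by rwa [nhdsWithin_Ioo_eq_nhdsGT hab])
    (by rwa [nhdsWithin_Ioo_eq_nhdsLT hab]) ⟨huy, hyv⟩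

noncomputable def betaFun (t : ℝ) : ℝ := (1 - √(1 - t)) / (t * √(1 - t))

noncomputable def gammaFun (t : ℝ) : ℝ := 2 * betaFun t + t * betaFun t ^ 2

noncomputable def rootTerm (a x : ℝ) : ℝ := 2 * a ^ 2 / (1 + √(1 + 4 * a ^ 2 * x))

noncomputable def gFun {ι : Type*} [Fintype ι] (a : ι → ℝ) (t : ℝ) : ℝ :=
  t - ∑ i, rootTerm (a i) (gammaFun t)

theorem betaFun_eq_one_div {t : ℝ} (ht : t ∈ Ioo 0 1) :
    betaFun t = 1 / ((1 + √(1 - t)) * √(1 - t)) := by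
  have hs : 0 < √(1 - t) := Real.sqrt_pos.mpr (by linarith [ht.2])
  have hsq : √(1 - t) ^ 2 = 1 - t := Real.sq_sqrt (by linarith [ht.2])
  rw [betaFun, div_eq_div_iff (mul_pos ht.1 hs).ne' (by positivity)]
  nlinarith

theorem tendsto_betaFun_nhdsGT_zero : Tendsto betaFun (𝓝[>] 0) (𝓝 (1 / 2)) := by
  have hcont : ContinuousAt (fun t : ℝ => 1 / ((1 + √(1 - t)) * √(1 - t))) 0 :=
    continuousAt_const.div (by fun_prop) (by norm_num)
  have hlim := hcont.tendsto.mono_left (nhdsWithin_le_nhds (s := Ioi 0))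
  norm_num at hlim
  refine hlim.congr' ?_
  filter_upwards [Ioo_mem_nhdsGT (zero_lt_one' ℝ)] with t ht
  rw [betaFun_eq_one_div ht, one_div, mul_inv, mul_comm]

theorem tendsto_gammaFun_nhdsGT_zero : Tendsto gammaFun (𝓝[>] 0) (𝓝 1) := by
  have hid : Tendsto id (𝓝[>] (0 : ℝ)) (𝓝 0) := tendsto_id.mono_left nhdsWithin_le_nhds
  have hβ := tendsto_betaFun_nhdsGT_zero
  unfold gammaFun
  simpa using (hβ.const_mul 2).add (hid.mul (hβ.pow 2))

theorem tendsto_betaFun_nhdsLT_one : Tendsto betaFun (𝓝[<] 1) atTop := by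
  have hsqrt : Tendsto (fun t : ℝ => √(1 - t)) (𝓝[<] 1) (𝓝 0) := by
    have hc : ContinuousAt (fun t : ℝ => √(1 - t)) 1 := by fun_prop
    simpa using hc.tendsto.mono_left nhdsWithin_le_nhds
  have hden : Tendsto (fun t : ℝ => t * √(1 - t)) (𝓝[<] 1) (𝓝[>] 0) := by
    have hid : Tendsto id (𝓝[<] (1 : ℝ)) (𝓝 1) := tendsto_id.mono_left nhdsWithin_le_nhds
    refine tendsto_nhdsWithin_iff.mpr ⟨by simpa using hid.mul hsqrt, ?_⟩
    filter_upwards [Ioo_mem_nhdsLT (zero_lt_one' ℝ)] with t ht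
    exact mul_pos ht.1 (Real.sqrt_pos.mpr (by linarith [ht.2]))
  have hnum : Tendsto (fun t : ℝ => 1 - √(1 - t)) (𝓝[<] 1) (𝓝 1) := by
    simpa using hsqrt.const_sub 1
  exact (hnum.pos_mul_atTop one_pos (tendsto_inv_nhdsGT_zero.comp hden)).congr
    fun t => (div_eq_mul_inv _ _).symm

theorem tendsto_gammaFun_nhdsLT_one : Tendsto gammaFun (𝓝[<] 1) atTop := by
  refine tendsto_atTop_mono' _ ?_ (tendsto_betaFun_nhdsLT_one.const_mul_atTop two_pos)
  filter_upwards [Ioo_mem_nhdsLT (zero_lt_one' ℝ)] with t ht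
  exact le_add_of_nonneg_right (by have := ht.1; positivity)

theorem continuousOn_gammaFun : ContinuousOn gammaFun (Ioo 0 1) := by
  have hβ : ContinuousOn betaFun (Ioo 0 1) := by
    refine ContinuousOn.div (by fun_prop) (by fun_prop) fun t ht => ?_
    exact (mul_pos ht.1 (Real.sqrt_pos.mpr (by linarith [ht.2]))).ne'
  exact (continuousOn_const.mul hβ).add (continuousOn_id.mul (hβ.pow 2))

theorem continuous_rootTerm (a : ℝ) : Continuous (rootTerm a) :=
  continuous_const.div (by fun_prop) fun x => by positivity

theorem rootTerm_one (a : ℝ) : rootTerm a 1 = (√(1 + 4 * a ^ 2) - 1) / 2 := by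
  have hsq := Real.sq_sqrt (by positivity : (0 : ℝ) ≤ 1 + 4 * a ^ 2)
  rw [rootTerm, mul_one, div_eq_div_iff (by positivity) two_ne_zero]
  nlinarith

theorem tendsto_rootTerm_atTop (a : ℝ) : Tendsto (rootTerm a) atTop (𝓝 0) := by
  rcases eq_or_ne a 0 with rfl | ha
  · exact tendsto_const_nhds.congr fun x => by simp [rootTerm]
  refine tendsto_const_nhds.div_atTop (tendsto_atTop_add_const_left _ _ ?_)
  exact Real.tendsto_sqrt_atTop.comp
    (tendsto_atTop_add_const_left _ _ (tendsto_id.const_mul_atTop (by positivity)))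

theorem sqrt_one_add_four_mul_sq_sub_one_pos {a : ℝ} (ha : a ≠ 0) : 0 < √(1 + 4 * a ^ 2) - 1 := by
  have h : 1 < √(1 + 4 * a ^ 2) := (Real.lt_sqrt zero_le_one).mpr (by simp [sq_pos_of_ne_zero ha])
  linarith

section gFun

variable {ι : Type*} [Fintype ι] (a : ι → ℝ)

theorem tendsto_gFun_nhdsGT_zero :
    Tendsto (gFun a) (𝓝[>] 0) (𝓝 (-(1 / 2) * ∑ i, (√(1 + 4 * a i ^ 2) - 1))) := by
  have hsum : Tendsto (fun t => ∑ i, rootTerm (a i) (gammaFun t)) (𝓝[>] 0)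
      (𝓝 (∑ i, rootTerm (a i) 1)) :=
    tendsto_finsetSum _ fun i _ =>
      ((continuous_rootTerm (a i)).tendsto 1).comp tendsto_gammaFun_nhdsGT_zero
  have hval : 0 - ∑ i, rootTerm (a i) 1 = -(1 / 2) * ∑ i, (√(1 + 4 * a i ^ 2) - 1) := by
    rw [zero_sub, Finset.mul_sum, ← Finset.sum_neg_distrib]
    exact Finset.sum_congr rfl fun i _ => by rw [rootTerm_one]; ring
  rw [← hval]
  exact (tendsto_id.mono_left nhdsWithin_le_nhds).sub hsum

theorem tendsto_gFun_nhdsLT_one : Tendsto (gFun a) (𝓝[<] 1) (𝓝 1) := by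
  have hsum : Tendsto (fun t => ∑ i, rootTerm (a i) (gammaFun t)) (𝓝[<] 1) (𝓝 0) := by
    simpa using tendsto_finsetSum Finset.univ fun i _ =>
      (tendsto_rootTerm_atTop (a i)).comp tendsto_gammaFun_nhdsLT_one
  unfold gFun
  simpa using (tendsto_id.mono_left (nhdsWithin_le_nhds (s := Iio (1 : ℝ)))).sub hsum

theorem continuousOn_gFun : ContinuousOn (gFun a) (Ioo 0 1) :=
  continuousOn_id.sub <| continuousOn_finsetSum _ fun i _ =>
    (continuous_rootTerm (a i)).comp_continuousOn continuousOn_gammaFun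

end gFun

theorem stmt_18 (n : ℕ) (hn : 0 < n) (a : Fin n → ℝ) (ha : ∀ i, a i ≠ 0) :
    let β : ℝ → ℝ := fun t => (1 - Real.sqrt (1 - t)) / (t * Real.sqrt (1 - t))
    let γ : ℝ → ℝ := fun t => 2 * β t + t * (β t) ^ 2
    let g : ℝ → ℝ := fun t =>
      t - ∑ i : Fin n, 2 * (a i) ^ 2 / (1 + Real.sqrt (1 + 4 * (a i) ^ 2 * γ t))
    Tendsto g (nhdsWithin 0 (Set.Ioi 0))
        (nhds (-(1 / 2) * ∑ i : Fin n, (Real.sqrt (1 + 4 * (a i) ^ 2) - 1))) ∧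
      -(1 / 2) * (∑ i : Fin n, (Real.sqrt (1 + 4 * (a i) ^ 2) - 1)) < 0 ∧
      Tendsto g (nhdsWithin 1 (Set.Iio 1)) (nhds 1) ∧
      ∃ ts ∈ Set.Ioo (0 : ℝ) 1, g ts = 0 := by
  intro β γ g
  have : Nonempty (Fin n) := Fin.pos_iff_nonempty.mp hn
  have hneg : -(1 / 2) * (∑ i, (√(1 + 4 * a i ^ 2) - 1)) < 0 := by
    have := Finset.sum_pos (fun i _ => sqrt_one_add_four_mul_sq_sub_one_pos (ha i))
      Finset.univ_nonempty
    linarith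
  exact ⟨tendsto_gFun_nhdsGT_zero a, hneg, tendsto_gFun_nhdsLT_one a,
    exists_mem_Ioo_eq_of_tendsto one_pos (continuousOn_gFun a) (tendsto_gFun_nhdsGT_zero a)
      (tendsto_gFun_nhdsLT_one a) hneg one_pos⟩
end
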